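/- arXiv:math/0003078 — 2 statements merged into one kernel-verified Lean document; each statement's English description precedes it below -/
import Mathlib

section
/- Gauss's summation theorem: for complex a, b, c with Re(c − a − b) > 0 and c not a nonpositive integer, ₂F₁(a, b; c; 1) = Γ(c)Γ(c−a−b) / (Γ(c−a)Γ(c−b)). -/
open Filter Finset Topology

noncomputable def gaussTerm (a b c : ℂ) (n : ℕ) : ℂ :=
  (ascPochhammer ℂ n).eval a * (ascPochhammer ℂ n).eval b
      / ((ascPochhammer ℂ n).eval c * n.factorial)

lemma poch_prod (x : ℂ) (n : ℕ) :
    (ascPochhammer ℂ n).eval x = ∏ j ∈ Finset.range n, (x + j) := by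
  induction n with
  | zero => simp
  | succ n ih => rw [ascPochhammer_succ_eval, ih, Finset.prod_range_succ]

lemma poch_ne_zero {x : ℂ} (hx : ∀ j : ℕ, x + j ≠ 0) (n : ℕ) :
    (ascPochhammer ℂ n).eval x ≠ 0 := by
  rw [poch_prod]
  exact Finset.prod_ne_zero_iff.2 fun j _ => hx j


lemma gaussTerm_zero (a b c : ℂ) : gaussTerm a b c 0 = 1 := by
  simp [gaussTerm]

lemma gaussTerm_succ (a b c : ℂ) (hc : ∀ j : ℕ, c + j ≠ 0) (n : ℕ) :
    gaussTerm a b c (n + 1)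
      = gaussTerm a b c n * ((a + n) * (b + n) / ((c + n) * (n + 1))) := by
  have hpc := poch_ne_zero hc n
  have hcn := hc n
  have hf : ((n.factorial : ℂ)) ≠ 0 := Nat.cast_ne_zero.2 n.factorial_ne_zero
  have hn1 : ((n : ℂ) + 1) ≠ 0 := by
    have : ((n : ℂ) + 1) = ((n + 1 : ℕ) : ℂ) := by push_cast; ring
    rw [this]
    exact Nat.cast_ne_zero.2 (Nat.succ_ne_zero n)
  simp only [gaussTerm, ascPochhammer_succ_eval, Nat.factorial_succ, Nat.cast_mul,
    Nat.cast_add, Nat.cast_one]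
  field_simp

set_option maxHeartbeats 1000000 in
lemma key_real_ineq (α β γ A B C s : ℝ) (hA : 0 ≤ A) (hB : 0 ≤ B) (hC : 0 ≤ C)
    (hs : 0 ≤ s) (hlt : s + α + β < γ) :
    ∀ᶠ x : ℝ in atTop, ((x+α)^2+A)*((x+β)^2+B) ≤ ((x+γ)^2+C)*(x-s)^2 := by
  set δ := γ - α - β - s with hδdef
  have hδ : 0 < δ := by simp [hδdef]; linarith
  filter_upwards [eventually_ge_atTop (2*|α|), eventually_ge_atTop (2*|β|),
    eventually_ge_atTop (1:ℝ), eventually_ge_atTop ((2*(s*γ+α*β))/δ),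
    eventually_ge_atTop ((4*(4*A+4*B+A*B))/δ)] with x hx1 hx2 hx3 hx4 hx5
  have hα1 : |α| ≤ x/2 := by linarith
  have hβ1 : |β| ≤ x/2 := by linarith
  have hα2 : x/2 ≤ x + α := by
    have := neg_abs_le α; linarith
  have hβ2 : x/2 ≤ x + β := by
    have := neg_abs_le β; linarith
  have hα3 : x + α ≤ 2*x := by have := le_abs_self α; linarith
  have hβ3 : x + β ≤ 2*x := by have := le_abs_self β; linarith
  have hx4' : 2*(s*γ+α*β) ≤ δ*x := by
    rw [div_le_iff₀ hδ] at hx4; linarith [hx4]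
  have hx5' : 4*(4*A+4*B+A*B) ≤ δ*x := by
    rw [div_le_iff₀ hδ] at hx5; linarith [hx5]
  set u := (x+α)*(x+β) with hu_def
  set v := (x+γ)*(x-s) with hv_def
  have hd : v - u = δ*x - (s*γ+α*β) := by rw [hu_def, hv_def, hδdef]; ring
  have hd2 : δ*x/2 ≤ v - u := by rw [hd]; linarith
  have hu : x^2/4 ≤ u := by rw [hu_def]; nlinarith
  have hupos : 0 < u := by nlinarith
  have hβ0 : 0 ≤ x + β := by linarith
  have hα0 : 0 ≤ x + α := by linarith
  have e1 : (x+β)^2 ≤ 4*x^2 := by nlinarith [mul_le_mul hβ3 hβ3 hβ0 (by linarith : (0:ℝ) ≤ 2*x)]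
  have e2 : (x+α)^2 ≤ 4*x^2 := by nlinarith [mul_le_mul hα3 hα3 hα0 (by linarith : (0:ℝ) ≤ 2*x)]
  have ex : 1 ≤ x^2 := by
    have h := mul_le_mul hx3 hx3 zero_le_one (by linarith : (0:ℝ) ≤ x)
    rw [sq]; linarith
  have small : A*(x+β)^2 + B*(x+α)^2 + A*B ≤ (4*A+4*B+A*B)*x^2 := by
    have := mul_le_mul_of_nonneg_left e1 hA
    have := mul_le_mul_of_nonneg_left e2 hB
    have := mul_le_mul_of_nonneg_left ex (mul_nonneg hA hB)
    nlinarith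
  have hd0 : 0 ≤ v - u := le_trans (by positivity) hd2
  have t1 : (δ*x/2)*(x^2/2) ≤ (v-u)*(2*u+(v-u)) :=
    mul_le_mul hd2 (by linarith) (by positivity) hd0
  have t2 : 4*(4*A+4*B+A*B)*x^2 ≤ (δ*x)*x^2 :=
    by nlinarith [mul_le_mul_of_nonneg_right hx5' (sq_nonneg x)]
  have big : (4*A+4*B+A*B)*x^2 ≤ (v-u)*(2*u+(v-u)) := by nlinarith
  have hvs : 0 ≤ (x-s)^2 := sq_nonneg _
  nlinarith [small, big, mul_nonneg hC hvs]
lemma norm_ratio (a b c : ℂ) (s : ℝ) (hs : 0 ≤ s) (hlt : s < (c-a-b).re) :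
    ∀ᶠ n : ℕ in atTop, ‖a+(n:ℂ)‖ * ‖b+(n:ℂ)‖ ≤ ‖c+(n:ℂ)‖ * ((n:ℝ) - s) := by
  have key := key_real_ineq a.re b.re c.re (a.im^2) (b.im^2) (c.im^2) s
    (sq_nonneg _) (sq_nonneg _) (sq_nonneg _) hs
    (by simp only [Complex.sub_re] at hlt; linarith)
  have h2 := (tendsto_natCast_atTop_atTop (R := ℝ)).eventually key
  filter_upwards [h2, eventually_ge_atTop ⌈s⌉₊] with n hn hns
  have hns' : s ≤ (n:ℝ) := le_trans (Nat.le_ceil s) (by exact_mod_cast hns)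
  have na : ‖a+(n:ℂ)‖^2 = ((n:ℝ)+a.re)^2 + a.im^2 := by
    rw [Complex.sq_norm, Complex.normSq_apply]
    simp [Complex.add_re, Complex.add_im]
    ring
  have nb : ‖b+(n:ℂ)‖^2 = ((n:ℝ)+b.re)^2 + b.im^2 := by
    rw [Complex.sq_norm, Complex.normSq_apply]
    simp [Complex.add_re, Complex.add_im]
    ring
  have nc : ‖c+(n:ℂ)‖^2 = ((n:ℝ)+c.re)^2 + c.im^2 := by
    rw [Complex.sq_norm, Complex.normSq_apply]
    simp [Complex.add_re, Complex.add_im]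
    ring
  have hsq : (‖a+(n:ℂ)‖ * ‖b+(n:ℂ)‖)^2 ≤ (‖c+(n:ℂ)‖ * ((n:ℝ) - s))^2 := by
    rw [mul_pow, mul_pow, na, nb, nc]
    exact hn
  have h0 : 0 ≤ ‖a+(n:ℂ)‖ * ‖b+(n:ℂ)‖ := by positivity
  have h1 : 0 ≤ ‖c+(n:ℂ)‖ * ((n:ℝ) - s) := by
    apply mul_nonneg (norm_nonneg _); linarith
  nlinarith [hsq, h0, h1]


lemma gaussTerm_bound (a b c : ℂ) (s : ℝ) (hs : 0 ≤ s) (hlt : s < (c-a-b).re)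
    (hc : ∀ j : ℕ, c + (j:ℂ) ≠ 0) :
    ∃ C : ℝ, ∀ᶠ n : ℕ in atTop, ‖gaussTerm a b c n‖ ≤ C / (n:ℝ)^(1+s) := by
  obtain ⟨n₀, hn₀⟩ := eventually_atTop.1 (norm_ratio a b c s hs hlt)
  set N := max n₀ (⌈s⌉₊ + 1) with hNdef
  have hsn : ∀ n : ℕ, N ≤ n → s + 1 ≤ (n:ℝ) := by
    intro n hn
    have h1 : ⌈s⌉₊ + 1 ≤ n := le_trans (le_max_right _ _) hn
    have h2 : s ≤ (⌈s⌉₊ : ℝ) := Nat.le_ceil s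
    have h3 : ((⌈s⌉₊ + 1 : ℕ) : ℝ) ≤ (n:ℝ) := by exact_mod_cast h1
    push_cast at h3; linarith
  have step : ∀ n : ℕ, N ≤ n →
      ((n+1:ℕ):ℝ)^(1+s) * ‖gaussTerm a b c (n+1)‖
        ≤ ((n:ℕ):ℝ)^(1+s) * ‖gaussTerm a b c n‖ := by
    intro n hn
    have hratio := hn₀ n (le_trans (le_max_left _ _) hn)
    have hsn' := hsn n hn
    have hnpos : (0:ℝ) < (n:ℝ) := by linarith
    have hn1 : (0:ℝ) < (n:ℝ) + 1 := by linarith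
    have hcn : (0:ℝ) < ‖c+(n:ℂ)‖ := norm_pos_iff.2 (hc n)
    have hnorm1 : ‖(n:ℂ)+1‖ = (n:ℝ)+1 := by
      rw [show ((n:ℂ)+1) = (((n:ℝ)+1 : ℝ):ℂ) by push_cast; ring, Complex.norm_real]
      exact abs_of_nonneg (by positivity)
    have ht : ‖gaussTerm a b c (n+1)‖
        = ‖gaussTerm a b c n‖ * (‖a+(n:ℂ)‖*‖b+(n:ℂ)‖ / (‖c+(n:ℂ)‖*((n:ℝ)+1))) := by
      rw [gaussTerm_succ a b c hc n, norm_mul, norm_div, norm_mul, norm_mul, hnorm1]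
    have step1 : ‖gaussTerm a b c (n+1)‖
        ≤ ‖gaussTerm a b c n‖ * (((n:ℝ)-s)/((n:ℝ)+1)) := by
      rw [ht]
      refine mul_le_mul_of_nonneg_left ?_ (norm_nonneg _)
      rw [div_le_div_iff₀ (by positivity) hn1]
      calc ‖a+(n:ℂ)‖*‖b+(n:ℂ)‖*((n:ℝ)+1)
          ≤ (‖c+(n:ℂ)‖*((n:ℝ)-s))*((n:ℝ)+1) := mul_le_mul_of_nonneg_right hratio hn1.le
        _ = ((n:ℝ)-s)*(‖c+(n:ℂ)‖*((n:ℝ)+1)) := by ring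
    -- the rpow inequality
    have hlogd : Real.log ((n:ℝ)+1) - Real.log (n:ℝ) ≤ 1/(n:ℝ) := by
      rw [← Real.log_div (by positivity) (by positivity)]
      have h4 : ((n:ℝ)+1)/(n:ℝ) = 1 + 1/(n:ℝ) := by field_simp
      have h5 := Real.log_le_sub_one_of_pos (show (0:ℝ) < ((n:ℝ)+1)/(n:ℝ) by positivity)
      rw [h4] at h5 ⊢; linarith
    have hlog : ((n:ℝ)+1)^s ≤ (n:ℝ)^s * Real.exp (s/(n:ℝ)) := by
      rw [Real.rpow_def_of_pos hn1, Real.rpow_def_of_pos hnpos, ← Real.exp_add]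
      apply Real.exp_le_exp.2
      have h6 := mul_le_mul_of_nonneg_right hlogd hs
      have h7 : s/(n:ℝ) = 1/(n:ℝ) * s := by ring
      rw [h7]; nlinarith
    have hexp : ((n:ℝ)-s) * Real.exp (s/(n:ℝ)) ≤ (n:ℝ) := by
      have h1 : (1:ℝ) - s/(n:ℝ) ≤ Real.exp (-(s/(n:ℝ))) := by
        have := Real.add_one_le_exp (-(s/(n:ℝ))); linarith
      have h2 : ((n:ℝ)-s) ≤ (n:ℝ) * Real.exp (-(s/(n:ℝ))) := by
        have h3 : (n:ℝ) * (1 - s/(n:ℝ)) = (n:ℝ) - s := by field_simp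
        nlinarith [mul_le_mul_of_nonneg_left h1 hnpos.le]
      calc ((n:ℝ)-s) * Real.exp (s/(n:ℝ))
          ≤ ((n:ℝ) * Real.exp (-(s/(n:ℝ)))) * Real.exp (s/(n:ℝ)) :=
            mul_le_mul_of_nonneg_right h2 (Real.exp_pos _).le
        _ = (n:ℝ) := by rw [mul_assoc, ← Real.exp_add]; simp
    have rpow1 : ((n:ℝ)+1)^(1+s) * (((n:ℝ)-s)/((n:ℝ)+1)) ≤ ((n:ℝ))^(1+s) := by
      rw [Real.rpow_add hn1, Real.rpow_add hnpos, Real.rpow_one, Real.rpow_one]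
      have hns0 : (0:ℝ) ≤ (n:ℝ) - s := by linarith
      calc ((n:ℝ)+1) * ((n:ℝ)+1)^s * (((n:ℝ)-s)/((n:ℝ)+1))
          = ((n:ℝ)+1)^s * ((n:ℝ)-s) := by field_simp
        _ ≤ ((n:ℝ)^s * Real.exp (s/(n:ℝ))) * ((n:ℝ)-s) :=
            mul_le_mul_of_nonneg_right hlog hns0
        _ = (n:ℝ)^s * (((n:ℝ)-s) * Real.exp (s/(n:ℝ))) := by ring
        _ ≤ (n:ℝ)^s * (n:ℝ) := mul_le_mul_of_nonneg_left hexp (Real.rpow_nonneg hnpos.le s)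
        _ = (n:ℝ) * (n:ℝ)^s := mul_comm _ _
    calc ((n+1:ℕ):ℝ)^(1+s) * ‖gaussTerm a b c (n+1)‖
        ≤ ((n+1:ℕ):ℝ)^(1+s) * (‖gaussTerm a b c n‖ * (((n:ℝ)-s)/((n:ℝ)+1))) := by
          apply mul_le_mul_of_nonneg_left step1 (Real.rpow_nonneg (by positivity) _)
      _ = (((n:ℝ)+1)^(1+s) * (((n:ℝ)-s)/((n:ℝ)+1))) * ‖gaussTerm a b c n‖ := by
          push_cast; ring
      _ ≤ ((n:ℝ))^(1+s) * ‖gaussTerm a b c n‖ :=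
          mul_le_mul_of_nonneg_right rpow1 (norm_nonneg _)
  have mono : ∀ n : ℕ, N ≤ n →
      ((n:ℕ):ℝ)^(1+s) * ‖gaussTerm a b c n‖
        ≤ ((N:ℕ):ℝ)^(1+s) * ‖gaussTerm a b c N‖ := by
    intro n hn
    induction n, hn using Nat.le_induction with
    | base => exact le_refl _
    | succ n hn ih => exact le_trans (step n hn) ih
  refine ⟨((N:ℕ):ℝ)^(1+s) * ‖gaussTerm a b c N‖, ?_⟩
  filter_upwards [eventually_ge_atTop N, eventually_ge_atTop 1] with n hn hn1
  have hnpos : (0:ℝ) < ((n:ℕ):ℝ)^(1+s) := by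
    apply Real.rpow_pos_of_pos
    exact_mod_cast Nat.pos_of_ne_zero (by omega)
  rw [le_div_iff₀ hnpos]
  calc ‖gaussTerm a b c n‖ * ((n:ℕ):ℝ)^(1+s)
      = ((n:ℕ):ℝ)^(1+s) * ‖gaussTerm a b c n‖ := mul_comm _ _
    _ ≤ _ := mono n hn

lemma gaussTerm_summable_norm (a b c : ℂ) (hre : 0 < (c-a-b).re)
    (hc : ∀ j : ℕ, c + (j:ℂ) ≠ 0) :
    Summable (fun n => ‖gaussTerm a b c n‖) := by
  set s := (c-a-b).re / 2 with hsdef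
  obtain ⟨C, hC⟩ := gaussTerm_bound a b c s (by linarith) (by rw [hsdef]; linarith) hc
  have hg : Summable (fun n : ℕ => C * (1/(n:ℝ)^(1+s))) :=
    (Real.summable_one_div_nat_rpow.2 (by linarith)).mul_left C
  apply Summable.of_norm_bounded_eventually_nat hg
  filter_upwards [hC] with n hn
  rw [Real.norm_eq_abs, abs_of_nonneg (norm_nonneg _), mul_one_div]
  exact hn

lemma gaussTerm_summable (a b c : ℂ) (hre : 0 < (c-a-b).re)
    (hc : ∀ j : ℕ, c + (j:ℂ) ≠ 0) :
    Summable (gaussTerm a b c) :=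
  (gaussTerm_summable_norm a b c hre hc).of_norm

lemma hc_succ {c : ℂ} (hc : ∀ j : ℕ, c + (j:ℂ) ≠ 0) : ∀ j : ℕ, (c+1) + (j:ℂ) ≠ 0 := by
  intro j
  have := hc (j+1)
  push_cast at this ⊢
  intro h; apply this; rw [← h]; ring

lemma gaussTerm_W_tendsto_zero (a b c : ℂ) (hre : 0 < (c-a-b).re)
    (hc : ∀ j : ℕ, c + (j:ℂ) ≠ 0) :
    Tendsto (fun n : ℕ => (n:ℂ) * ((n:ℂ)+c) * gaussTerm a b (c+1) n) atTop (𝓝 0) := by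
  set σ := (c-a-b).re with hσdef
  have hlt : 1 + σ/2 < (c+1-a-b).re := by
    have : (c+1-a-b).re = σ + 1 := by rw [hσdef]; simp [Complex.add_re, Complex.sub_re]; ring
    rw [this]; linarith
  obtain ⟨C, hC⟩ := gaussTerm_bound a b (c+1) (1+σ/2) (by positivity) hlt (hc_succ hc)
  apply squeeze_zero_norm' (a := fun n : ℕ => (C * (1+‖c‖)) / (n:ℝ)^(σ/2))
  · filter_upwards [hC, eventually_ge_atTop 1] with n hn hn1
    have hnpos : (0:ℝ) < (n:ℝ) := by exact_mod_cast Nat.pos_of_ne_zero (by omega)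
    have hb1 : ‖(n:ℂ) * ((n:ℂ)+c)‖ ≤ (n:ℝ) * ((n:ℝ) + ‖c‖) := by
      rw [norm_mul]
      apply mul_le_mul _ _ (norm_nonneg _) (by positivity)
      · simp
      · calc ‖(n:ℂ)+c‖ ≤ ‖(n:ℂ)‖ + ‖c‖ := norm_add_le _ _
          _ = (n:ℝ) + ‖c‖ := by simp
    calc ‖(n:ℂ) * ((n:ℂ)+c) * gaussTerm a b (c+1) n‖
        = ‖(n:ℂ) * ((n:ℂ)+c)‖ * ‖gaussTerm a b (c+1) n‖ := norm_mul _ _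
      _ ≤ ((n:ℝ) * ((n:ℝ) + ‖c‖)) * (C / (n:ℝ)^(1+(1+σ/2))) := by
          apply mul_le_mul hb1 hn (norm_nonneg _) (by positivity)
      _ ≤ ((1+‖c‖) * (n:ℝ)^2) * (C / (n:ℝ)^(1+(1+σ/2))) := by
          have h2 : (n:ℝ) * ((n:ℝ) + ‖c‖) ≤ (1+‖c‖) * (n:ℝ)^2 := by
            have h3 : (1:ℝ) ≤ (n:ℝ) := by exact_mod_cast hn1
            have h4 : (n:ℝ) ≤ (n:ℝ)^2 := by nlinarith
            nlinarith [mul_le_mul_of_nonneg_right h4 (norm_nonneg c)]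
          have h4 : (0:ℝ) ≤ C / (n:ℝ)^(1+(1+σ/2)) := by
            rcases le_or_gt 0 C with h|h
            · positivity
            · -- C < 0 contradicts hn plus norm nonneg
              exfalso
              have := le_trans (norm_nonneg _) hn
              have h5 : (0:ℝ) < (n:ℝ)^(1+(1+σ/2)) := Real.rpow_pos_of_pos hnpos _
              have := (div_nonneg_iff.1 (le_trans (norm_nonneg _) hn))
              rcases this with ⟨h6,_⟩|⟨_,h7⟩
              · linarith
              · linarith
          exact mul_le_mul_of_nonneg_right h2 h4
      _ = (C * (1+‖c‖)) / (n:ℝ)^(σ/2) := by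
          rw [show (1:ℝ)+(1+σ/2) = 2 + σ/2 by ring, Real.rpow_add hnpos,
            Real.rpow_two]
          field_simp
  · apply Filter.Tendsto.div_atTop tendsto_const_nhds
    exact (tendsto_rpow_atTop (by linarith : (0:ℝ) < σ/2)).comp tendsto_natCast_atTop_atTop

noncomputable def gSum (a b c : ℂ) : ℂ := ∑' n, gaussTerm a b c n

lemma poch_shift (c : ℂ) (n : ℕ) :
    c * (ascPochhammer ℂ n).eval (c+1) = (ascPochhammer ℂ n).eval c * (c + n) := by
  induction n with
  | zero => simp
  | succ n ih =>
    rw [ascPochhammer_succ_eval, ascPochhammer_succ_eval, ← mul_assoc, ih]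
    push_cast; ring

lemma gaussTerm_shift (a b c : ℂ) (hc : ∀ j : ℕ, c + (j:ℂ) ≠ 0) (n : ℕ) :
    gaussTerm a b (c+1) n = gaussTerm a b c n * (c / (c + n)) := by
  have h0 : c ≠ 0 := by have := hc 0; simpa using this
  have hcn : c + (n:ℂ) ≠ 0 := hc n
  have hpc : (ascPochhammer ℂ n).eval c ≠ 0 := poch_ne_zero hc n
  have hpc1 : (ascPochhammer ℂ n).eval (c+1) ≠ 0 := poch_ne_zero (hc_succ hc) n
  have hf : ((n.factorial : ℂ)) ≠ 0 := Nat.cast_ne_zero.2 n.factorial_ne_zero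
  have hps := poch_shift c n
  rw [gaussTerm, gaussTerm]
  field_simp
  linear_combination (-((ascPochhammer ℂ n).eval a * (ascPochhammer ℂ n).eval b)) * hps

lemma telescope_term (a b c : ℂ) (hc : ∀ j : ℕ, c + (j:ℂ) ≠ 0) (n : ℕ) :
    c*(c-a-b) * gaussTerm a b c n - (c-a)*(c-b) * gaussTerm a b (c+1) n
      = (n:ℂ)*((n:ℂ)+c) * gaussTerm a b (c+1) n
        - ((n:ℂ)+1)*(((n:ℂ)+1)+c) * gaussTerm a b (c+1) (n+1) := by
  have h0 : c ≠ 0 := by have := hc 0; simpa using this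
  have hcn : c + (n:ℂ) ≠ 0 := hc n
  have hcn1 : (c+1) + (n:ℂ) ≠ 0 := hc_succ hc n
  have hn1 : ((n:ℂ) + 1) ≠ 0 := by
    have : ((n : ℂ) + 1) = ((n + 1 : ℕ) : ℂ) := by push_cast; ring
    rw [this]; exact Nat.cast_ne_zero.2 (Nat.succ_ne_zero n)
  rw [gaussTerm_succ a b (c+1) (hc_succ hc) n, gaussTerm_shift a b c hc n]
  field_simp
  ring

lemma contiguous (a b c : ℂ) (hre : 0 < (c-a-b).re) (hc : ∀ j : ℕ, c + (j:ℂ) ≠ 0) :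
    c*(c-a-b) * gSum a b c = (c-a)*(c-b) * gSum a b (c+1) := by
  have hre1 : 0 < (c+1-a-b).re := by
    have h : (c+1-a-b).re = (c-a-b).re + 1 := by
      simp [Complex.add_re, Complex.sub_re]; ring
    rw [h]; linarith
  have h1 := (gaussTerm_summable a b c hre hc).hasSum
  have h2 := (gaussTerm_summable a b (c+1) hre1 (hc_succ hc)).hasSum
  have h3 : HasSum (fun n => c*(c-a-b) * gaussTerm a b c n
      - (c-a)*(c-b) * gaussTerm a b (c+1) n)
      (c*(c-a-b) * gSum a b c - (c-a)*(c-b) * gSum a b (c+1)) :=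
    (h1.mul_left _).sub (h2.mul_left _)
  have h4 := h3.tendsto_sum_nat
  set W : ℕ → ℂ := fun k => (k:ℂ)*((k:ℂ)+c) * gaussTerm a b (c+1) k with hW
  have h5 : ∀ N : ℕ, ∑ n ∈ Finset.range N, (c*(c-a-b) * gaussTerm a b c n
      - (c-a)*(c-b) * gaussTerm a b (c+1) n) = - W N := by
    intro N
    have h7 : ∀ n ∈ Finset.range N, (c*(c-a-b) * gaussTerm a b c n
        - (c-a)*(c-b) * gaussTerm a b (c+1) n) = W n - W (n+1) := by
      intro n _
      rw [hW, telescope_term a b c hc n]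
      push_cast
      ring
    rw [Finset.sum_congr rfl h7, Finset.sum_range_sub' W N]
    rw [hW]
    simp
  simp only [h5] at h4
  have h6 : Tendsto (fun N : ℕ => - W N) atTop (𝓝 0) := by
    rw [hW]
    simpa using (gaussTerm_W_tendsto_zero a b c hre hc).neg
  have h8 := tendsto_nhds_unique h4 h6
  exact sub_eq_zero.1 h8

lemma hc_add {c : ℂ} (hc : ∀ j : ℕ, c + (j:ℂ) ≠ 0) (n : ℕ) :
    ∀ j : ℕ, (c + (n:ℂ)) + (j:ℂ) ≠ 0 := by
  intro j
  have := hc (n + j)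
  push_cast at this
  intro h; apply this; rw [← h]; ring

lemma iterate_rel (a b c : ℂ) (hre : 0 < (c-a-b).re) (hc : ∀ j : ℕ, c + (j:ℂ) ≠ 0) (n : ℕ) :
    gSum a b c * ((ascPochhammer ℂ n).eval c * (ascPochhammer ℂ n).eval (c-a-b))
      = (ascPochhammer ℂ n).eval (c-a) * (ascPochhammer ℂ n).eval (c-b)
        * gSum a b (c + (n:ℂ)) := by
  induction n with
  | zero => simp
  | succ n ih =>
    have hre' : 0 < ((c+(n:ℂ))-a-b).re := by
      have h : ((c+(n:ℂ))-a-b).re = (c-a-b).re + n := by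
        simp [Complex.add_re, Complex.sub_re, Complex.natCast_re]; ring
      rw [h]; positivity
    have key := contiguous a b (c+(n:ℂ)) hre' (hc_add hc n)
    have hcast : c + ((n+1:ℕ):ℂ) = (c + (n:ℂ)) + 1 := by push_cast; ring
    rw [hcast]
    rw [ascPochhammer_succ_eval, ascPochhammer_succ_eval, ascPochhammer_succ_eval,
      ascPochhammer_succ_eval]
    linear_combination ((c-a-b+(n:ℂ))*(c+(n:ℂ))) * ih
      + ((ascPochhammer ℂ n).eval (c-a) * (ascPochhammer ℂ n).eval (c-b)) * key

lemma gSum_eq_ratio (a b c : ℂ) (hre : 0 < (c-a-b).re) (hc : ∀ j : ℕ, c + (j:ℂ) ≠ 0) (n : ℕ) :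
    gSum a b c = (ascPochhammer ℂ n).eval (c-a) * (ascPochhammer ℂ n).eval (c-b)
        / ((ascPochhammer ℂ n).eval c * (ascPochhammer ℂ n).eval (c-a-b))
        * gSum a b (c + (n:ℂ)) := by
  have h1 : (ascPochhammer ℂ n).eval c ≠ 0 := poch_ne_zero hc n
  have h2 : (ascPochhammer ℂ n).eval (c-a-b) ≠ 0 := by
    apply poch_ne_zero
    intro j
    intro h
    have := congrArg Complex.re h
    simp [Complex.add_re, Complex.sub_re, Complex.natCast_re] at this
    have hj : (0:ℝ) ≤ (j:ℝ) := Nat.cast_nonneg j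
    simp [Complex.sub_re] at hre
    linarith
  have := iterate_rel a b c hre hc n
  field_simp
  linear_combination this

lemma ratio_tendsto (a b c : ℂ) (hre : 0 < (c-a-b).re) (hc : ∀ j : ℕ, c + (j:ℂ) ≠ 0) :
    Tendsto (fun n : ℕ => (ascPochhammer ℂ n).eval (c-a) * (ascPochhammer ℂ n).eval (c-b)
      / ((ascPochhammer ℂ n).eval c * (ascPochhammer ℂ n).eval (c-a-b))) atTop
      (𝓝 (Complex.Gamma c * Complex.Gamma (c-a-b)
        / (Complex.Gamma (c-a) * Complex.Gamma (c-b)))) := by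
  by_cases hdeg : (∃ m : ℕ, c - a = -(m:ℂ)) ∨ (∃ m : ℕ, c - b = -(m:ℂ))
  · -- degenerate case: RHS is zero and LHS eventually zero
    have hG : Complex.Gamma (c-a) * Complex.Gamma (c-b) = 0 := by
      rcases hdeg with ⟨m, hm⟩ | ⟨m, hm⟩
      · rw [(Complex.Gamma_eq_zero_iff _).2 ⟨m, hm⟩, zero_mul]
      · rw [(Complex.Gamma_eq_zero_iff _).2 ⟨m, hm⟩, mul_zero]
    rw [hG, div_zero]
    apply tendsto_nhds_of_eventually_eq
    obtain m := hdeg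
    have : ∃ m : ℕ, ((ascPochhammer ℂ (m+1)).eval (c-a) = 0 ∨
        (ascPochhammer ℂ (m+1)).eval (c-b) = 0) := by
      rcases hdeg with ⟨m, hm⟩ | ⟨m, hm⟩
      · exact ⟨m, Or.inl (by
          rw [poch_prod]
          apply Finset.prod_eq_zero (Finset.self_mem_range_succ m)
          rw [hm]; ring)⟩
      · exact ⟨m, Or.inr (by
          rw [poch_prod]
          apply Finset.prod_eq_zero (Finset.self_mem_range_succ m)
          rw [hm]; ring)⟩
    obtain ⟨m, hm⟩ := this
    filter_upwards [eventually_ge_atTop (m+1)] with n hn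
    have hz : (ascPochhammer ℂ n).eval (c-a) = 0 ∨ (ascPochhammer ℂ n).eval (c-b) = 0 := by
      rcases hm with h | h
      · left
        rw [poch_prod] at h ⊢
        obtain ⟨j, hj, hj0⟩ := Finset.prod_eq_zero_iff.1 h
        exact Finset.prod_eq_zero (Finset.mem_range.2 (lt_of_lt_of_le (Finset.mem_range.1 hj) hn)) hj0
      · right
        rw [poch_prod] at h ⊢
        obtain ⟨j, hj, hj0⟩ := Finset.prod_eq_zero_iff.1 h
        exact Finset.prod_eq_zero (Finset.mem_range.2 (lt_of_lt_of_le (Finset.mem_range.1 hj) hn)) hj0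
    rcases hz with h | h <;> rw [h] <;> simp
  · push_neg at hdeg
    obtain ⟨hca, hcb⟩ := hdeg
    have hca' : ∀ j : ℕ, (c-a) + (j:ℂ) ≠ 0 := by
      intro j h; exact hca j (by linear_combination h)
    have hcb' : ∀ j : ℕ, (c-b) + (j:ℂ) ≠ 0 := by
      intro j h; exact hcb j (by linear_combination h)
    have hcab' : ∀ j : ℕ, (c-a-b) + (j:ℂ) ≠ 0 := by
      intro j h
      have := congrArg Complex.re h
      simp [Complex.add_re, Complex.natCast_re] at this
      have hj : (0:ℝ) ≤ (j:ℝ) := Nat.cast_nonneg j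
      simp [Complex.sub_re] at hre
      linarith
    have hne : Complex.Gamma (c-a) * Complex.Gamma (c-b) ≠ 0 :=
      mul_ne_zero (Complex.Gamma_ne_zero fun m h => hca m (by rw [h]))
        (Complex.Gamma_ne_zero fun m h => hcb m (by rw [h]))
    have hT : Tendsto (fun n : ℕ => Complex.GammaSeq c n * Complex.GammaSeq (c-a-b) n
        / (Complex.GammaSeq (c-a) n * Complex.GammaSeq (c-b) n)) atTop
        (𝓝 (Complex.Gamma c * Complex.Gamma (c-a-b)
          / (Complex.Gamma (c-a) * Complex.Gamma (c-b)))) :=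
      ((Complex.GammaSeq_tendsto_Gamma c).mul
        (Complex.GammaSeq_tendsto_Gamma (c-a-b))).div
        (((Complex.GammaSeq_tendsto_Gamma (c-a)).mul
          (Complex.GammaSeq_tendsto_Gamma (c-b)))) hne
    have key : ∀ n : ℕ, n ≠ 0 →
        Complex.GammaSeq c n * Complex.GammaSeq (c-a-b) n
          / (Complex.GammaSeq (c-a) n * Complex.GammaSeq (c-b) n)
        = (ascPochhammer ℂ (n+1)).eval (c-a) * (ascPochhammer ℂ (n+1)).eval (c-b)
          / ((ascPochhammer ℂ (n+1)).eval c * (ascPochhammer ℂ (n+1)).eval (c-a-b)) := by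
      intro n hn
      have hn0 : (n:ℂ) ≠ 0 := Nat.cast_ne_zero.2 hn
      have hpow : (n:ℂ)^c * (n:ℂ)^(c-a-b) = (n:ℂ)^(c-a) * (n:ℂ)^(c-b) := by
        rw [← Complex.cpow_add _ _ hn0, ← Complex.cpow_add _ _ hn0]
        congr 1; ring
      have hx : ∀ z : ℂ, (n:ℂ)^z ≠ 0 := fun z h =>
        hn0 ((Complex.cpow_eq_zero_iff _ _).1 h).1
      have hPc : (ascPochhammer ℂ (n+1)).eval c ≠ 0 := poch_ne_zero hc (n+1)
      have hPcab : (ascPochhammer ℂ (n+1)).eval (c-a-b) ≠ 0 := poch_ne_zero hcab' (n+1)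
      have hPca : (ascPochhammer ℂ (n+1)).eval (c-a) ≠ 0 := poch_ne_zero hca' (n+1)
      have hPcb : (ascPochhammer ℂ (n+1)).eval (c-b) ≠ 0 := poch_ne_zero hcb' (n+1)
      have hf : ((n.factorial : ℂ)) ≠ 0 := Nat.cast_ne_zero.2 n.factorial_ne_zero
      simp only [Complex.GammaSeq]
      rw [← poch_prod c, ← poch_prod (c-a-b), ← poch_prod (c-a), ← poch_prod (c-b)]
      field_simp
      rw [div_eq_iff (by
        exact mul_ne_zero (hx _) (hx _))]
      linear_combination hpow
    have hT' : Tendsto (fun n : ℕ => (ascPochhammer ℂ (n+1)).eval (c-a)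
        * (ascPochhammer ℂ (n+1)).eval (c-b)
        / ((ascPochhammer ℂ (n+1)).eval c * (ascPochhammer ℂ (n+1)).eval (c-a-b))) atTop
        (𝓝 (Complex.Gamma c * Complex.Gamma (c-a-b)
          / (Complex.Gamma (c-a) * Complex.Gamma (c-b)))) := by
      apply hT.congr'
      filter_upwards [eventually_ge_atTop 1] with n hn
      exact key n (by omega)
    exact (tendsto_add_atTop_iff_nat 1).1 hT'

lemma poch_real (r : ℝ) (k : ℕ) :
    (ascPochhammer ℂ k).eval ((r:ℂ)) = (((∏ j ∈ Finset.range k, (r + j)) : ℝ) : ℂ) := by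
  rw [poch_prod]
  push_cast
  rfl

lemma norm_poch_le (x : ℂ) (k : ℕ) :
    ‖(ascPochhammer ℂ k).eval x‖ ≤ ∏ j ∈ Finset.range k, (‖x‖ + j) := by
  rw [poch_prod, norm_prod]
  apply Finset.prod_le_prod (fun j _ => norm_nonneg _)
  intro j _
  calc ‖x + (j:ℂ)‖ ≤ ‖x‖ + ‖(j:ℂ)‖ := norm_add_le _ _
    _ = ‖x‖ + j := by simp

lemma norm_poch_ge (x : ℂ) (hx : 0 ≤ x.re) (k : ℕ) :
    ∏ j ∈ Finset.range k, (x.re + j) ≤ ‖(ascPochhammer ℂ k).eval x‖ := by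
  rw [poch_prod, norm_prod]
  apply Finset.prod_le_prod
  · intro j _; positivity
  · intro j _
    calc x.re + (j:ℝ) = (x + (j:ℂ)).re := by simp
      _ ≤ ‖x + (j:ℂ)‖ := Complex.re_le_norm _

lemma prod_factor_ge (x y : ℝ) (h0 : 0 < y) (hxy : y ≤ x) (m : ℕ) :
    x / y * (∏ j ∈ Finset.range (m+1), (y + (j:ℝ))) ≤ ∏ j ∈ Finset.range (m+1), (x + (j:ℝ)) := by
  have hx0 : 0 < x := lt_of_lt_of_le h0 hxy
  rw [Finset.prod_range_succ', Finset.prod_range_succ']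
  push_cast
  simp only [add_zero]
  have h1 : ∏ j ∈ Finset.range m, (y + ((j:ℝ)+1)) ≤ ∏ j ∈ Finset.range m, (x + ((j:ℝ)+1)) :=
    Finset.prod_le_prod (fun j _ => by positivity) (fun j _ => by linarith)
  have h2 : (0:ℝ) ≤ ∏ j ∈ Finset.range m, (y + ((j:ℝ)+1)) :=
    Finset.prod_nonneg fun j _ => by positivity
  have h3 : x/y * ((∏ j ∈ Finset.range m, (y + ((j:ℝ)+1))) * y)
      = (∏ j ∈ Finset.range m, (y + ((j:ℝ)+1))) * x := by
    field_simp
  rw [h3]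
  exact mul_le_mul_of_nonneg_right h1 hx0.le

set_option maxHeartbeats 1000000 in
lemma gSum_tendsto_one (a b c : ℂ) (hre : 0 < (c-a-b).re) (hc : ∀ j : ℕ, c + (j:ℂ) ≠ 0) :
    Tendsto (fun n : ℕ => gSum a b (c + (n:ℂ))) atTop (𝓝 1) := by
  set A := ‖a‖ with hA
  set B := ‖b‖ with hB
  set C₀ := A + B + 2 with hC₀
  have hA0 : 0 ≤ A := norm_nonneg a
  have hB0 : 0 ≤ B := norm_nonneg b
  have hC₀2 : 2 ≤ C₀ := by rw [hC₀]; linarith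
  have hC₀0 : 0 < C₀ := by linarith
  have hreC : 0 < ((C₀:ℂ) - A - B).re := by
    have h : ((C₀:ℂ) - (A:ℂ) - (B:ℂ)) = (((C₀ - A - B : ℝ)) : ℂ) := by push_cast; ring
    rw [h, Complex.ofReal_re, hC₀]; linarith
  have hcC : ∀ j : ℕ, (C₀:ℂ) + (j:ℂ) ≠ 0 := by
    intro j h
    have := congrArg Complex.re h
    simp [Complex.add_re] at this
    have hj : (0:ℝ) ≤ (j:ℝ) := Nat.cast_nonneg j
    linarith
  have hsum0 := gaussTerm_summable_norm (A:ℂ) (B:ℂ) (C₀:ℂ) hreC hcC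
  have hS_sum : Summable (fun m : ℕ => ‖gaussTerm (A:ℂ) (B:ℂ) (C₀:ℂ) (m+1)‖) :=
    (summable_nat_add_iff 1).2 hsum0
  set S := ∑' m : ℕ, ‖gaussTerm (A:ℂ) (B:ℂ) (C₀:ℂ) (m+1)‖ with hS
  have hval : ∀ k : ℕ, ‖gaussTerm (A:ℂ) (B:ℂ) (C₀:ℂ) k‖
      = (∏ j ∈ Finset.range k, (A + j)) * (∏ j ∈ Finset.range k, (B + j))
        / ((∏ j ∈ Finset.range k, (C₀ + j)) * k.factorial) := by
    intro k
    have h1 : gaussTerm (A:ℂ) (B:ℂ) (C₀:ℂ) k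
        = ((((∏ j ∈ Finset.range k, (A + j)) * (∏ j ∈ Finset.range k, (B + j))
          / ((∏ j ∈ Finset.range k, (C₀ + j)) * k.factorial)) : ℝ) : ℂ) := by
      rw [gaussTerm, poch_real, poch_real, poch_real]
      push_cast
      ring
    rw [h1, Complex.norm_real]
    apply abs_of_nonneg
    have : (0:ℝ) < ∏ j ∈ Finset.range k, (C₀ + j) :=
      Finset.prod_pos fun j _ => by positivity
    positivity
  have key : ∀ n : ℕ, C₀ ≤ c.re + n → ∀ m : ℕ,
      ‖gaussTerm a b (c+(n:ℂ)) (m+1)‖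
        ≤ C₀ / (c.re + n) * ‖gaussTerm (A:ℂ) (B:ℂ) (C₀:ℂ) (m+1)‖ := by
    intro n hn m
    have hcn0 : (0:ℝ) < c.re + n := by linarith
    have hRC : (0:ℝ) < ∏ j ∈ Finset.range (m+1), (C₀ + j) :=
      Finset.prod_pos fun j _ => by positivity
    have hfac : (0:ℝ) < ((m+1).factorial : ℝ) := by
      exact_mod_cast Nat.factorial_pos (m+1)
    have hnum : ‖(ascPochhammer ℂ (m+1)).eval a * (ascPochhammer ℂ (m+1)).eval b‖
        ≤ (∏ j ∈ Finset.range (m+1), (A + j)) * (∏ j ∈ Finset.range (m+1), (B + j)) := by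
      rw [norm_mul]
      exact mul_le_mul (norm_poch_le a (m+1)) (norm_poch_le b (m+1)) (norm_nonneg _)
        (Finset.prod_nonneg fun j _ => by positivity)
    have hden1 : ∏ j ∈ Finset.range (m+1), ((c.re + n) + j)
        ≤ ‖(ascPochhammer ℂ (m+1)).eval (c + (n:ℂ))‖ := by
      have h2 := norm_poch_ge (c + (n:ℂ)) (by simp [Complex.add_re]; linarith) (m+1)
      have h3 : (c + (n:ℂ)).re = c.re + n := by simp [Complex.add_re]
      rw [h3] at h2
      exact h2
    have hden2 := prod_factor_ge (c.re + n) C₀ hC₀0 hn m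
    have hnorm : ‖gaussTerm a b (c+(n:ℂ)) (m+1)‖
        = ‖(ascPochhammer ℂ (m+1)).eval a * (ascPochhammer ℂ (m+1)).eval b‖
          / (‖(ascPochhammer ℂ (m+1)).eval (c+(n:ℂ))‖ * ((m+1).factorial : ℝ)) := by
      rw [gaussTerm, norm_div, norm_mul]
      congr 2
      simp
    rw [hnorm, hval (m+1)]
    calc ‖(ascPochhammer ℂ (m+1)).eval a * (ascPochhammer ℂ (m+1)).eval b‖
          / (‖(ascPochhammer ℂ (m+1)).eval (c+(n:ℂ))‖ * ((m+1).factorial : ℝ))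
        ≤ ((∏ j ∈ Finset.range (m+1), (A + j)) * (∏ j ∈ Finset.range (m+1), (B + j)))
          / (((c.re + n) / C₀ * (∏ j ∈ Finset.range (m+1), (C₀ + j))) * ((m+1).factorial : ℝ)) := by
          apply div_le_div₀ (by positivity) hnum (by positivity)
          apply mul_le_mul_of_nonneg_right (le_trans hden2 hden1) hfac.le
      _ = C₀ / (c.re + n) * ((∏ j ∈ Finset.range (m+1), (A + j))
            * (∏ j ∈ Finset.range (m+1), (B + j))
            / ((∏ j ∈ Finset.range (m+1), (C₀ + j)) * ((m+1).factorial : ℝ))) := by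
          field_simp
  have hbound : ∀ n : ℕ, C₀ ≤ c.re + n →
      ‖gSum a b (c + (n:ℂ)) - 1‖ ≤ C₀ / (c.re + n) * S := by
    intro n hn
    have hcn0 : (0:ℝ) < c.re + n := by linarith
    have hre_n : 0 < ((c + (n:ℂ))-a-b).re := by
      have h : ((c + (n:ℂ))-a-b).re = (c-a-b).re + n := by
        simp [Complex.add_re, Complex.sub_re]; ring
      rw [h]; positivity
    have hsn := gaussTerm_summable a b (c + (n:ℂ)) hre_n (hc_add hc n)
    have hsn_norm := gaussTerm_summable_norm a b (c + (n:ℂ)) hre_n (hc_add hc n)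
    have hsn_tail : Summable (fun m : ℕ => ‖gaussTerm a b (c + (n:ℂ)) (m+1)‖) :=
      (summable_nat_add_iff 1).2 hsn_norm
    have h0 : gSum a b (c + (n:ℂ)) = 1 + ∑' m : ℕ, gaussTerm a b (c + (n:ℂ)) (m+1) := by
      rw [gSum, Summable.tsum_eq_zero_add hsn, gaussTerm_zero]
    rw [h0]
    simp only [add_sub_cancel_left]
    calc ‖∑' m : ℕ, gaussTerm a b (c + (n:ℂ)) (m+1)‖
        ≤ ∑' m : ℕ, ‖gaussTerm a b (c + (n:ℂ)) (m+1)‖ := norm_tsum_le_tsum_norm hsn_tail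
      _ ≤ ∑' m : ℕ, (C₀ / (c.re + n) * ‖gaussTerm (A:ℂ) (B:ℂ) (C₀:ℂ) (m+1)‖) :=
          Summable.tsum_le_tsum (key n hn) hsn_tail (hS_sum.mul_left _)
      _ = C₀ / (c.re + n) * S := by rw [tsum_mul_left]
  have hg0 : Tendsto (fun n : ℕ => C₀ / (c.re + n) * S) atTop (𝓝 0) := by
    have h1 : Tendsto (fun n : ℕ => c.re + (n:ℝ)) atTop atTop :=
      tendsto_atTop_add_const_left atTop c.re tendsto_natCast_atTop_atTop
    have h2 : Tendsto (fun n : ℕ => (C₀ * S) / (c.re + n)) atTop (𝓝 0) :=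
      Filter.Tendsto.div_atTop tendsto_const_nhds h1
    apply h2.congr
    intro n
    ring
  have hev : ∀ᶠ n : ℕ in atTop, C₀ ≤ c.re + n := by
    have h1 : Tendsto (fun n : ℕ => c.re + (n:ℝ)) atTop atTop :=
      tendsto_atTop_add_const_left atTop c.re tendsto_natCast_atTop_atTop
    exact h1.eventually_ge_atTop C₀
  have hz : Tendsto (fun n : ℕ => gSum a b (c + (n:ℂ)) - 1) atTop (𝓝 0) := by
    apply squeeze_zero_norm' (a := fun n : ℕ => C₀ / (c.re + n) * S) _ hg0
    filter_upwards [hev] with n hn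
    exact hbound n hn
  have h9 := hz.add (tendsto_const_nhds (x := (1:ℂ)))
  simp only [zero_add] at h9
  apply h9.congr
  intro n
  ring

/-- The Gauss hypergeometric series `₂F₁(a, b; c; z)` for complex parameters. -/
noncomputable def hyp2F1C (a b c z : ℂ) : ℂ :=
  ∑' n : ℕ, ((ascPochhammer ℂ n).eval a * (ascPochhammer ℂ n).eval b
      / ((ascPochhammer ℂ n).eval c * n.factorial)) * z ^ n

/-- Gauss's summation theorem
`₂F₁(a,b;c;1) = Γ(c)Γ(c−a−b)/(Γ(c−a)Γ(c−b))` for `Re(c−a−b) > 0` and `c` not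
a nonpositive integer. -/
theorem gauss_summation
    (a b c : ℂ) (hre : 0 < (c - a - b).re) (hc : ∀ j : ℕ, c ≠ -(j : ℂ)) :
    hyp2F1C a b c 1
      = Complex.Gamma c * Complex.Gamma (c - a - b)
        / (Complex.Gamma (c - a) * Complex.Gamma (c - b)) := by
  have hc' : ∀ j : ℕ, c + (j:ℂ) ≠ 0 := by
    intro j h
    exact hc j (by linear_combination h)
  have h1 : hyp2F1C a b c 1 = gSum a b c := by
    rw [hyp2F1C, gSum]
    congr 1
    funext n
    rw [gaussTerm, one_pow, mul_one]
  have hQ := (ratio_tendsto a b c hre hc').mul (gSum_tendsto_one a b c hre hc')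
  rw [mul_one] at hQ
  have hconst : (fun n : ℕ => (ascPochhammer ℂ n).eval (c-a) * (ascPochhammer ℂ n).eval (c-b)
      / ((ascPochhammer ℂ n).eval c * (ascPochhammer ℂ n).eval (c-a-b))
      * gSum a b (c + (n:ℂ)))
      = fun _ : ℕ => gSum a b c := funext fun n => (gSum_eq_ratio a b c hre hc' n).symm
  rw [hconst] at hQ
  rw [h1, tendsto_nhds_unique tendsto_const_nhds hQ]
end

section
/- For a nonnegative integer τ and real α, the finite sum identity holds: 1 = ∑_{n=0}^{τ} ((−1)ⁿ/(n!)²) ((τ+n)!/(τ−n)!) tanh^{2n}(α/2) ₂F₁(−τ, 1+τ; 1+n; −sinh²(α/2)). -/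
/-- The Gauss hypergeometric series `₂F₁(a, b; c; x)`. -/
noncomputable def hyp2F1 (a b c x : ℝ) : ℝ :=
  ∑' n : ℕ, ((ascPochhammer ℝ n).eval a * (ascPochhammer ℝ n).eval b
      / ((ascPochhammer ℝ n).eval c * n.factorial)) * x ^ n

/-!
With `s = sinh²(α/2)` and `y = tanh²(α/2) = s / (1 + s)`, Pfaff's transformation (for terminating
series, a consequence of Chu–Vandermonde) rewrites the `n`-th hypergeometric factor as
`(1 + s)^τ ₂F₁(-τ, n - τ; 1 + n; y)`. In the resulting double sum the coefficient of `y^k` is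
`C(τ, k) ∑ₙ (-1)ⁿ C(k, n) C(τ + n, k)`, up to sign the `k`-th forward difference of `x ↦ C(x, k)`,
hence `(-1)^k C(τ, k)`. The whole sum is therefore `(1 + s)^τ (1 - y)^τ = (cosh² - sinh²)^τ = 1`.
-/

open Finset Nat

lemma ascPochhammer_eval_natCast_add_one {R : Type*} [Semiring R] (m j : ℕ) :
    (ascPochhammer R j).eval ((m : R) + 1) = (j ! * (m + j).choose j : ℕ) := by
  rw [← Nat.cast_succ, ascPochhammer_nat_eq_natCast_ascFactorial,
    Nat.ascFactorial_eq_factorial_mul_choose]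

lemma ascPochhammer_eval_neg_natCast {R : Type*} [Ring R] (m j : ℕ) :
    (ascPochhammer R j).eval (-(m : R)) = (-1) ^ j * (j ! * m.choose j : ℕ) := by
  rw [ascPochhammer_eval_neg_eq_descPochhammer, descPochhammer_eval_eq_descFactorial,
    Nat.descFactorial_eq_factorial_mul_choose]

lemma hyp2F1_neg_natCast (m : ℕ) (b c x : ℝ) :
    hyp2F1 (-m) b c x = ∑ j ∈ range (m + 1),
      (ascPochhammer ℝ j).eval (-(m : ℝ)) * (ascPochhammer ℝ j).eval b
        / ((ascPochhammer ℝ j).eval c * j !) * x ^ j :=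
  tsum_eq_sum fun j hj => by
    rw [ascPochhammer_eval_neg_coe_nat_of_lt (by simpa using hj)]
    simp

lemma hyp2F1_neg_natCast_one_add_natCast (τ n : ℕ) (x : ℝ) :
    hyp2F1 (-τ) (1 + τ) (1 + n) x = ∑ j ∈ range (τ + 1),
      (τ.choose j * (τ + j).choose j : ℝ) / (n + j).choose j * (-x) ^ j := by
  rw [hyp2F1_neg_natCast]
  refine sum_congr rfl fun j _ => ?_
  rw [add_comm (1 : ℝ), add_comm (1 : ℝ), ascPochhammer_eval_neg_natCast,
    ascPochhammer_eval_natCast_add_one, ascPochhammer_eval_natCast_add_one, neg_pow x]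
  have : (j ! : ℝ) ≠ 0 := by positivity
  push_cast
  field_simp

lemma hyp2F1_neg_natCast_neg_natCast (τ m n : ℕ) (x : ℝ) :
    hyp2F1 (-τ) (-m) (1 + n) x = ∑ j ∈ range (τ + 1),
      (τ.choose j * m.choose j : ℝ) / (n + j).choose j * x ^ j := by
  rw [hyp2F1_neg_natCast]
  refine sum_congr rfl fun j _ => ?_
  rw [add_comm (1 : ℝ), ascPochhammer_eval_neg_natCast, ascPochhammer_eval_neg_natCast,
    ascPochhammer_eval_natCast_add_one, mul_mul_mul_comm, ← mul_pow, neg_one_mul, neg_neg,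
    one_pow, one_mul]
  have : (j ! : ℝ) ≠ 0 := by positivity
  push_cast
  field_simp

lemma sum_range_sum_range_eq_sum_range_sum_range_sub {M : Type*} [AddCommMonoid M] (N : ℕ)
    (g : ℕ → ℕ → M) (hg : ∀ i j, N < i + j → g i j = 0) :
    ∑ i ∈ range (N + 1), ∑ j ∈ range (N + 1), g i j
      = ∑ k ∈ range (N + 1), ∑ i ∈ range (k + 1), g i (k - i) := by
  rw [sum_range_diag_flip]
  refine sum_congr rfl fun i _ => (sum_subset (range_subset_range.2 (Nat.sub_le _ _)) ?_).symm
  intro j _ hj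
  exact hg i j (by simp only [mem_range] at hj; omega)

lemma choose_mul_add_choose {n j k : ℕ} (h : j ≤ k) :
    k.choose j * (n + k).choose k = (n + k).choose (k - j) * (n + j).choose j := by
  have hmul := Nat.choose_mul (n := n + k) (k := n + j) (Nat.le_add_left j n)
  rw [Nat.add_sub_cancel, Nat.choose_symm_of_eq_add (show n + k = n + j + (k - j) by omega),
    Nat.choose_symm_of_eq_add (show n + k - j = n + (k - j) by omega)] at hmul
  rw [hmul, mul_comm, Nat.choose_mul h]

lemma sum_neg_one_pow_mul_choose_mul_choose_add (m k : ℕ) :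
    ∑ n ∈ range (k + 1), (-1 : ℤ) ^ n * (k.choose n * (m + n).choose k) = (-1) ^ k := by
  have h := congr_fun (fwdDiff_iter_choose 0 k) m
  rw [fwdDiff_iter_eq_sum_shift] at h
  simp only [Nat.choose_zero_right, add_zero, Nat.cast_one, smul_eq_mul, mul_one] at h
  calc ∑ n ∈ range (k + 1), (-1 : ℤ) ^ n * (k.choose n * (m + n).choose k)
      = (-1) ^ k * ∑ n ∈ range (k + 1), (-1) ^ (k - n) * (k.choose n : ℤ) * (m + n).choose k := by
        rw [mul_sum]
        refine sum_congr rfl fun n hn => ?_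
        obtain ⟨i, rfl⟩ : ∃ i, k = n + i := ⟨k - n, by simp at hn; omega⟩
        have hi : (-1 : ℤ) ^ i * (-1) ^ i = 1 := pow_mul_pow_eq_one i (by norm_num)
        rw [Nat.add_sub_cancel_left, pow_add]
        linear_combination -(-1 : ℤ) ^ n * ((n + i).choose n * (m + n).choose (n + i) : ℤ) * hi
    _ = (-1) ^ k := by rw [h, mul_one]

lemma sum_choose_mul_choose_div_choose_mul_choose {τ n : ℕ} (hn : n ≤ τ) (k : ℕ) :
    ∑ j ∈ range (k + 1),
        (τ.choose j * (τ - n).choose j : ℝ) / (n + j).choose j * (τ - j).choose (k - j)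
      = τ.choose k * (τ + k).choose k / (n + k).choose k := by
  have hterm : ∀ j ∈ range (k + 1),
      (τ.choose j * (τ - n).choose j : ℝ) / (n + j).choose j * (τ - j).choose (k - j)
        = τ.choose k / (n + k).choose k * ((τ - n).choose j * (n + k).choose (k - j) : ℕ) := by
    intro j hj
    have hjk : j ≤ k := Nat.lt_succ_iff.mp (mem_range.mp hj)
    have h₁ : (τ.choose j * (τ - j).choose (k - j) : ℝ) = τ.choose k * k.choose j := by
      exact_mod_cast (Nat.choose_mul hjk).symm
    have h₂ : (k.choose j * (n + k).choose k : ℝ) = (n + k).choose (k - j) * (n + j).choose j := by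
      exact_mod_cast choose_mul_add_choose hjk
    have : ((n + j).choose j : ℝ) ≠ 0 := by exact_mod_cast (Nat.choose_pos (by omega)).ne'
    have : ((n + k).choose k : ℝ) ≠ 0 := by exact_mod_cast (Nat.choose_pos (by omega)).ne'
    push_cast
    field_simp
    linear_combination ((τ - n).choose j * (n + k).choose k : ℝ) * h₁
      + (τ.choose k * (τ - n).choose j : ℝ) * h₂
  have hvandermonde : ∑ j ∈ range (k + 1), (τ - n).choose j * (n + k).choose (k - j)
      = (τ + k).choose k := by
    rw [show τ + k = τ - n + (n + k) by omega, Nat.add_choose_eq,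
      Finset.Nat.sum_antidiagonal_eq_sum_range_succ_mk]
  rw [sum_congr rfl hterm, ← mul_sum, ← Nat.cast_sum, hvandermonde]
  ring

lemma choose_mul_choose_add_mul_choose_mul_choose_div {τ n k : ℕ} (hnk : n ≤ k) :
    (τ.choose n * (τ + n).choose n : ℝ)
        * ((τ.choose (k - n) * (τ - n).choose (k - n) : ℝ) / (n + (k - n)).choose (k - n))
      = τ.choose k * (k.choose n * (τ + n).choose k) := by
  have h₁ : (τ.choose k * k.choose n : ℝ) = τ.choose n * (τ - n).choose (k - n) := by
    exact_mod_cast Nat.choose_mul hnk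
  have h₂ : ((τ + n).choose k * k.choose n : ℝ) = (τ + n).choose n * τ.choose (k - n) := by
    exact_mod_cast (Nat.add_sub_cancel τ n) ▸ Nat.choose_mul hnk
  have : (k.choose n : ℝ) ≠ 0 := by exact_mod_cast (Nat.choose_pos hnk).ne'
  rw [Nat.add_sub_cancel' hnk, Nat.choose_symm hnk]
  field_simp
  linear_combination -(τ.choose n * (τ - n).choose (k - n) : ℝ) * h₂
    - ((τ + n).choose k * k.choose n : ℝ) * h₁

theorem hyp2F1_neg_natCast_pfaff {τ n : ℕ} (hn : n ≤ τ) {s : ℝ} (hs : 1 + s ≠ 0) :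
    hyp2F1 (-τ) (1 + τ) (1 + n) (-s)
      = (1 + s) ^ τ * hyp2F1 (-τ) (-(τ - n : ℕ)) (1 + n) (s / (1 + s)) := by
  set f : ℕ → ℝ := fun j => (τ.choose j * (τ - n).choose j : ℝ) / (n + j).choose j with hf
  have hrow : ∀ j ∈ range (τ + 1), (1 + s) ^ τ * (f j * (s / (1 + s)) ^ j)
      = ∑ i ∈ range (τ + 1), f j * (τ - j).choose i * s ^ (j + i) := by
    intro j hj
    have hjτ : j ≤ τ := Nat.lt_succ_iff.mp (mem_range.mp hj)
    have hbinom : (1 + s) ^ (τ - j) = ∑ i ∈ range (τ + 1), ((τ - j).choose i : ℝ) * s ^ i := by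
      rw [add_comm, add_pow]
      refine (sum_subset (range_subset_range.2 (by omega)) fun i _ hi => ?_).trans
        (sum_congr rfl fun i _ => by ring)
      rw [Nat.choose_eq_zero_of_lt (by simp only [mem_range] at hi; omega)]
      simp
    calc (1 + s) ^ τ * (f j * (s / (1 + s)) ^ j)
        = f j * s ^ j * (1 + s) ^ (τ - j) := by
          rw [div_pow, ← Nat.add_sub_cancel' hjτ, pow_add, Nat.add_sub_cancel_left]
          field_simp
      _ = _ := by
          rw [hbinom, mul_sum]
          exact sum_congr rfl fun i _ => by ring
  rw [hyp2F1_neg_natCast_one_add_natCast, hyp2F1_neg_natCast_neg_natCast, neg_neg, mul_sum,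
    sum_congr rfl hrow, sum_range_sum_range_eq_sum_range_sum_range_sub]
  · refine sum_congr rfl fun k _ => ?_
    rw [← sum_choose_mul_choose_div_choose_mul_choose hn, sum_mul]
    refine sum_congr rfl fun j hj => ?_
    rw [Nat.add_sub_cancel' (Nat.lt_succ_iff.mp (mem_range.mp hj))]
  · intro j i hji
    rcases le_or_gt j τ with hjτ | hjτ
    · rw [Nat.choose_eq_zero_of_lt (by omega : τ - j < i)]
      simp
    · simp [hf, Nat.choose_eq_zero_of_lt hjτ]

theorem sum_choose_mul_choose_mul_hyp2F1 (τ : ℕ) (y : ℝ) :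
    ∑ n ∈ range (τ + 1), (-1) ^ n * (τ.choose n * (τ + n).choose n : ℝ) * y ^ n
        * hyp2F1 (-τ) (-(τ - n : ℕ)) (1 + n) y = (1 - y) ^ τ := by
  simp_rw [hyp2F1_neg_natCast_neg_natCast, mul_sum]
  rw [sum_range_sum_range_eq_sum_range_sum_range_sub]
  · have hcoeff : ∀ k ∈ range (τ + 1), ∑ n ∈ range (k + 1), (-1) ^ n
          * (τ.choose n * (τ + n).choose n : ℝ) * y ^ n
          * ((τ.choose (k - n) * (τ - n).choose (k - n) : ℝ) / (n + (k - n)).choose (k - n)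
            * y ^ (k - n))
        = (-y) ^ k * 1 ^ (τ - k) * τ.choose k := by
      intro k _
      have halt := sum_neg_one_pow_mul_choose_mul_choose_add τ k
      calc _ = ∑ n ∈ range (k + 1), y ^ k * τ.choose k
              * (((-1) ^ n * (k.choose n * (τ + n).choose k) : ℤ) : ℝ) := by
            refine sum_congr rfl fun n hn => ?_
            have hnk := Nat.lt_succ_iff.mp (mem_range.mp hn)
            rw [← pow_mul_pow_sub y hnk]
            push_cast
            linear_combination (-1) ^ n * y ^ n * y ^ (k - n)
              * choose_mul_choose_add_mul_choose_mul_choose_div (τ := τ) hnk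
        _ = _ := by
            rw [← mul_sum, ← Int.cast_sum, halt, neg_pow]
            push_cast
            ring
    rw [sum_congr rfl hcoeff, sub_eq_neg_add, add_pow]
  · intro n j hnj
    rcases le_or_gt n τ with hnτ | hnτ
    · rw [Nat.choose_eq_zero_of_lt (by omega : τ - n < j)]
      simp
    · simp [Nat.choose_eq_zero_of_lt hnτ]

lemma choose_mul_choose_add_eq_factorial_div {τ n : ℕ} (hn : n ≤ τ) :
    (τ.choose n * (τ + n).choose n : ℝ) = (τ + n)! / ((τ - n)! * n ! ^ 2) := by
  rw [Nat.cast_choose ℝ hn, Nat.cast_choose ℝ (Nat.le_add_left n τ), Nat.add_sub_cancel]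
  have : (τ ! : ℝ) ≠ 0 := by positivity
  field_simp

/-- the finite sum identity
`1 = ∑_{n=0}^{τ} ((−1)ⁿ/(n!)²)((τ+n)!/(τ−n)!) tanh^{2n}(α/2)
  ₂F₁(−τ, 1+τ; 1+n; −sinh²(α/2))`. -/
theorem finite_sum_identity (τ : ℕ) (α : ℝ) :
    (1 : ℝ) = ∑ n ∈ Finset.range (τ + 1),
      ((-1 : ℝ) ^ n / (n.factorial : ℝ) ^ 2)
        * ((τ + n).factorial : ℝ) / ((τ - n).factorial : ℝ)
        * Real.tanh (α / 2) ^ (2 * n)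
        * hyp2F1 (-(τ : ℝ)) (1 + τ) (1 + n) (-(Real.sinh (α / 2)) ^ 2) := by
  set s := Real.sinh (α / 2) ^ 2
  set y := Real.tanh (α / 2) ^ 2
  have hcosh : 1 + s = Real.cosh (α / 2) ^ 2 := (Real.cosh_sq' _).symm
  have hs : 1 + s ≠ 0 := by rw [hcosh]; positivity
  have hy : s / (1 + s) = y := by rw [hcosh, ← div_pow, ← Real.tanh_eq_sinh_div_cosh]
  have hsy : (1 + s) * (1 - y) = 1 := by rw [← hy]; field_simp; ring
  calc (1 : ℝ) = (1 + s) ^ τ * (1 - y) ^ τ := by rw [← mul_pow, hsy, one_pow]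
    _ = _ := by
      rw [← sum_choose_mul_choose_mul_hyp2F1, mul_sum]
      refine sum_congr rfl fun n hn => ?_
      have hnτ := Nat.lt_succ_iff.mp (mem_range.mp hn)
      rw [hyp2F1_neg_natCast_pfaff hnτ hs, hy, choose_mul_choose_add_eq_factorial_div hnτ,
        pow_mul]
      ring
end
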